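/- Suppose the interaction graph is complete (N_i = V \ {i} for every i, so n_i = n − 1), and p_i(0) ∈ (0,1) for all i ∈ V. Let n^−(0) and n^+(0) denote the numbers of agents with q_i(0) = 0 and q_i(0) = 1, respectively. If n^−(0) > n^+(0), then lim_{k→∞} p_i(k) = 0 for every i ∈ V; conversely, if n^+(0) > n^−(0), then lim_{k→∞} p_i(k) = 1 for every i ∈ V. -/

import Mathlib

/-!
On the complete graph agent `i` sees the fraction `c = (#ones - q_i) / (n - 1)` of the others
acting `1` and moves by `x ↦ x + x (1 - x) (c - x)`. An opinion below `1/2` facing `c ≤ 1/2` stays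
below `1/2`, and one at or above `1/2` facing `c ≥ 1/2` stays there; so the initial majority never
loses a member and keeps `c` on its side of `1/2`. A minority agent that never switches sees the
majority with a margin of `1/(n - 1)`, so its distance from the end of `[0, 1]` favoured by its own
action grows by a fixed factor at every step, which is impossible. Hence eventually all agents act
alike, and then every opinion follows `x ↦ x - x² (1 - x)`, or its mirror image under `x ↦ 1 - x`,
to `0`, respectively `1`.
-/

open Filter Finset Topology

/-- The CODA update of an opinion `x` when a fraction `c` of its in-neighbours act `1`. -/
def codaStep (c x : ℝ) : ℝ := x + x * (1 - x) * (c - x)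

section CodaStep

variable {c d x : ℝ}

lemma codaStep_mem_Ioo (hx : x ∈ Set.Ioo 0 1) (hc : c ∈ Set.Icc 0 1) :
    codaStep c x ∈ Set.Ioo 0 1 := by
  obtain ⟨hx0, hx1⟩ := hx
  obtain ⟨hc0, hc1⟩ := hc
  have hvar : 0 < x * (1 - x) := mul_pos hx0 (by linarith)
  constructor <;> unfold codaStep <;>
    nlinarith [mul_nonneg hvar.le hc0, mul_nonneg hvar.le (sub_nonneg.2 hc1)]

lemma one_sub_codaStep : 1 - codaStep c x = codaStep (1 - c) (1 - x) := by
  unfold codaStep; ring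

lemma codaStep_lt_half (hx0 : 0 < x) (hx : x < 1 / 2) (hc : c ≤ 1 / 2) :
    codaStep c x < 1 / 2 := by
  have hvar : 0 < x * (1 - x) := mul_pos hx0 (by linarith)
  unfold codaStep
  nlinarith [mul_nonneg hvar.le (sub_nonneg.2 hc),
    mul_pos (sub_pos.2 hx) (by nlinarith : 0 < 1 - x * (1 - x))]

lemma half_le_codaStep (hx : 1 / 2 ≤ x) (hx1 : x ≤ 1) (hc : 1 / 2 ≤ c) :
    1 / 2 ≤ codaStep c x := by
  have hvar : 0 ≤ x * (1 - x) := mul_nonneg (by linarith) (by linarith)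
  unfold codaStep
  nlinarith [mul_nonneg hvar (sub_nonneg.2 hc),
    mul_nonneg (sub_nonneg.2 hx) (by nlinarith : 0 ≤ 1 - x * (1 - x))]

lemma mul_le_codaStep (hx0 : 0 < x) (hx : x ≤ 1 / 2) (hd : 0 ≤ d) (hc : 1 / 2 + d ≤ c) :
    (1 + d / 2) * x ≤ codaStep c x := by
  have : d / 2 ≤ (1 - x) * (c - x) := by
    nlinarith [mul_le_mul_of_nonneg_right (by linarith : 1 / 2 ≤ 1 - x) (by linarith : 0 ≤ c - x)]
  unfold codaStep
  nlinarith [mul_le_mul_of_nonneg_left this hx0.le]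

lemma codaStep_zero_le (hx0 : 0 ≤ x) (hx1 : x ≤ 1) : codaStep 0 x ≤ x := by
  unfold codaStep
  nlinarith [mul_nonneg (mul_nonneg hx0 hx0) (sub_nonneg.2 hx1)]

lemma continuous_codaStep : Continuous (codaStep c) := by
  unfold codaStep; fun_prop

lemma tendsto_iterate_codaStep_zero (hx : x ∈ Set.Ioo 0 1) :
    Tendsto (fun m => (codaStep 0)^[m] x) atTop (𝓝 0) := by
  set u := fun m => (codaStep 0)^[m] x
  have hu : ∀ m, u m ∈ Set.Ioo 0 1 := fun m => by
    induction m with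
    | zero => exact hx
    | succ m ih =>
      simp only [u, Function.iterate_succ_apply']
      exact codaStep_mem_Ioo ih ⟨le_rfl, zero_le_one⟩
  have hanti : Antitone u := antitone_nat_of_succ_le fun m => by
    simp only [u, Function.iterate_succ_apply']
    exact codaStep_zero_le (hu m).1.le (hu m).2.le
  have hbdd : BddBelow (Set.range u) := ⟨0, by rintro _ ⟨m, rfl⟩; exact (hu m).1.le⟩
  have hlim := tendsto_atTop_ciInf hanti hbdd
  set L := ⨅ m, u m
  have hfix : codaStep 0 L = L :=
    isFixedPt_of_tendsto_iterate hlim continuous_codaStep.continuousAt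
  have hL1 : L < 1 := (ciInf_le hbdd 0).trans_lt (hu 0).2
  have : L = 0 := by
    have h : L * L * (1 - L) = 0 := by unfold codaStep at hfix; linear_combination -hfix
    rcases mul_eq_zero.1 h with h | h
    · exact mul_self_eq_zero.1 h
    · linarith
  rwa [this] at hlim

lemma tendsto_iterate_codaStep_one (hx : x ∈ Set.Ioo 0 1) :
    Tendsto (fun m => (codaStep 1)^[m] x) atTop (𝓝 1) := by
  have hsemi : Function.Semiconj (1 - ·) (codaStep 1) (codaStep 0) := fun y => by
    simpa using one_sub_codaStep (c := 1) (x := y)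
  have h := (tendsto_iterate_codaStep_zero (x := 1 - x)
    ⟨by simp [hx.2], by simp [hx.1]⟩).const_sub 1
  simp only [← (hsemi.iterate_right _).eq, sub_sub_cancel, sub_zero] at h
  exact h

end CodaStep

lemma tendsto_of_succ_eq_of_tendsto_iterate {α : Type*} {f : α → α} {u : ℕ → α} {K : ℕ}
    {l : Filter α} (hu : ∀ k ≥ K, u (k + 1) = f (u k))
    (hf : Tendsto (fun m => f^[m] (u K)) atTop l) : Tendsto u atTop l := by
  refine (tendsto_add_atTop_iff_nat K).1 (hf.congr fun m => ?_)
  induction m with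
  | zero => simp
  | succ m ih =>
    rw [Function.iterate_succ_apply', ih, Nat.add_right_comm, hu _ (Nat.le_add_left K m)]

lemma Nat.eventually_atTop_of_exists_of_succ {P : ℕ → Prop} (hex : ∃ k, P k)
    (hsucc : ∀ k, P k → P (k + 1)) : ∀ᶠ k in atTop, P k := by
  obtain ⟨k₀, hk₀⟩ := hex
  exact eventually_atTop.2 ⟨k₀, fun k hk => Nat.le_induction hk₀ (fun k _ => hsucc k) k hk⟩

lemma update_complete_eq_codaStep {n : ℕ} (hn : 2 ≤ n) (a : Fin n → ℝ) (i : Fin n) (x : ℝ) :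
    x + x * (1 - x) / #(univ \ {i}) * ∑ j ∈ univ \ {i}, (a j - x) =
      codaStep ((∑ j, a j - a i) / (n - 1)) x := by
  have hn1 : (0 : ℝ) < n - 1 := by
    have : (2 : ℝ) ≤ n := by exact_mod_cast hn
    linarith
  rw [sdiff_singleton_eq_erase, sum_sub_distrib, sum_erase_eq_sub (mem_univ i), sum_const,
    card_erase_of_mem (mem_univ i), card_univ, Fintype.card_fin, nsmul_eq_mul,
    Nat.cast_sub (by omega), Nat.cast_one, codaStep]
  field_simp

noncomputable def codaAction (x xPrev : ℝ) : ℕ :=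
  if x < 1 / 2 ∨ (x = 1 / 2 ∧ xPrev < 1 / 2) then 0 else 1

section CodaAction

variable {x y : ℝ}

lemma codaAction_le_one : codaAction x y ≤ 1 := by
  unfold codaAction; split_ifs <;> omega

lemma codaAction_eq_zero_of_lt_half (hx : x < 1 / 2) : codaAction x y = 0 :=
  if_pos (Or.inl hx)

lemma codaAction_eq_one_of_half_lt (hx : 1 / 2 < x) : codaAction x y = 1 :=
  if_neg (by rintro (h | ⟨h, -⟩) <;> linarith)

lemma codaAction_eq_one (hx : 1 / 2 ≤ x) (hy : 1 / 2 ≤ y) : codaAction x y = 1 :=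
  if_neg (by rintro (h | ⟨-, h⟩) <;> linarith)

lemma half_le_of_codaAction_eq_one (h : codaAction x y = 1) : 1 / 2 ≤ x := by
  by_contra! hx
  rw [codaAction_eq_zero_of_lt_half hx] at h
  exact zero_ne_one h

lemma codaAction_self_eq_zero_iff : codaAction x x = 0 ↔ x < 1 / 2 :=
  ⟨fun h => by_contra fun hx => by
    rw [codaAction_eq_one (not_lt.1 hx) (not_lt.1 hx)] at h
    exact one_ne_zero h, codaAction_eq_zero_of_lt_half⟩

end CodaAction

def numOnes {n : ℕ} (q : Fin n → ℕ → ℕ) (k : ℕ) : ℕ := #{j | q j k = 1}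

section NumOnes

variable {n : ℕ} {q : Fin n → ℕ → ℕ} {k : ℕ}

lemma sum_cast_eq_numOnes (hq : ∀ j, q j k ≤ 1) : ∑ j, (q j k : ℝ) = numOnes q k := by
  rw [numOnes, ← sum_boole]
  refine sum_congr rfl fun j _ => ?_
  rcases Nat.le_one_iff_eq_zero_or_eq_one.1 (hq j) with h | h <;> simp [h]

lemma card_filter_eq_zero_add_numOnes (hq : ∀ j, q j k ≤ 1) :
    #{j | q j k = 0} + numOnes q k = n := by
  rw [numOnes]
  conv_rhs => rw [← Fintype.card_fin n, ← card_univ,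
    ← card_filter_add_card_filter_not (fun j => q j k = 0)]
  congr 2
  exact filter_congr fun j _ => by
    rcases Nat.le_one_iff_eq_zero_or_eq_one.1 (hq j) with h | h <;> simp [h]

lemma le_numOnes (i : Fin n) (hq : q i k ≤ 1) : q i k ≤ numOnes q k := by
  rcases Nat.le_one_iff_eq_zero_or_eq_one.1 hq with h | h
  · simp [h]
  · exact h ▸ card_pos.2 ⟨i, by simp [h]⟩

lemma numOnes_le (i : Fin n) : numOnes q k ≤ n - 1 + q i k := by
  by_cases h : q i k = 1
  · have := card_filter_le (univ : Finset (Fin n)) (fun j => q j k = 1)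
    simp only [card_univ, Fintype.card_fin] at this
    unfold numOnes; omega
  · have : numOnes q k ≤ #(univ.erase i) :=
      card_le_card fun j hj => mem_erase.2 ⟨by rintro rfl; simp_all, mem_univ j⟩
    rw [card_erase_of_mem (mem_univ i), card_univ, Fintype.card_fin] at this
    omega

end NumOnes

/-- CODA on the complete graph, with the neighbour average written through `numOnes`. -/
structure IsCompleteCODA (n : ℕ) (p : Fin n → ℕ → ℝ) (q : Fin n → ℕ → ℕ) : Prop where
  two_le : 2 ≤ n
  -- at `k = 0` the truncated `k - 1` makes the tie-break compare `p i 0` with itself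
  action_eq : ∀ i k, q i k = codaAction (p i k) (p i (k - 1))
  step_eq : ∀ i k, p i (k + 1) = codaStep ((numOnes q k - q i k) / (n - 1)) (p i k)
  mem_Ioo_zero : ∀ i, p i 0 ∈ Set.Ioo 0 1

namespace IsCompleteCODA

variable {n : ℕ} {p : Fin n → ℕ → ℝ} {q : Fin n → ℕ → ℕ} {i : Fin n} {k : ℕ}

lemma q_le_one (h : IsCompleteCODA n p q) (i : Fin n) (k : ℕ) : q i k ≤ 1 :=
  h.action_eq i k ▸ codaAction_le_one

lemma sub_one_pos (h : IsCompleteCODA n p q) : (0 : ℝ) < n - 1 := by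
  have : (2 : ℝ) ≤ n := by exact_mod_cast h.two_le
  linarith

lemma q_zero_eq_zero_iff (h : IsCompleteCODA n p q) (i : Fin n) : q i 0 = 0 ↔ p i 0 < 1 / 2 := by
  rw [h.action_eq, Nat.zero_sub, codaAction_self_eq_zero_iff]

lemma q_succ_eq_one (h : IsCompleteCODA n p q) (h1 : 1 / 2 ≤ p i (k + 1)) (h0 : 1 / 2 ≤ p i k) :
    q i (k + 1) = 1 := by
  rw [h.action_eq, Nat.add_sub_cancel]
  exact codaAction_eq_one h1 h0

lemma share_mem_Icc (h : IsCompleteCODA n p q) (i : Fin n) (k : ℕ) :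
    ((numOnes q k - q i k) / (n - 1) : ℝ) ∈ Set.Icc 0 1 := by
  have hge : (q i k : ℝ) ≤ numOnes q k := by exact_mod_cast le_numOnes i (h.q_le_one i k)
  have hle : (numOnes q k : ℝ) ≤ (n - 1 : ℕ) + q i k := by exact_mod_cast numOnes_le i
  rw [Nat.cast_sub (by have := h.two_le; omega), Nat.cast_one] at hle
  exact ⟨div_nonneg (by linarith) h.sub_one_pos.le, (div_le_one h.sub_one_pos).2 (by linarith)⟩

lemma mem_Ioo (h : IsCompleteCODA n p q) (k : ℕ) (i : Fin n) : p i k ∈ Set.Ioo 0 1 := by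
  induction k generalizing i with
  | zero => exact h.mem_Ioo_zero i
  | succ k ih => exact h.step_eq i k ▸ codaStep_mem_Ioo (ih i) (h.share_mem_Icc i k)

lemma lt_half_succ (h : IsCompleteCODA n p q) (hk : 2 * numOnes q k < n) (hp : p i k < 1 / 2) :
    p i (k + 1) < 1 / 2 := by
  have hm : (2 * numOnes q k + 1 : ℝ) ≤ n := by exact_mod_cast hk
  have hq : (0 : ℝ) ≤ q i k := Nat.cast_nonneg _
  rw [h.step_eq]
  refine codaStep_lt_half (h.mem_Ioo k i).1 hp ?_
  rw [div_le_iff₀ h.sub_one_pos]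
  linarith

lemma two_mul_numOnes_lt (h : IsCompleteCODA n p q) (h0 : 2 * numOnes q 0 < n) (k : ℕ) :
    2 * numOnes q k < n := by
  -- agents starting below `1 / 2` stay there, so the set of `1`-actors never grows
  have hle : ∀ k, (∀ j, q j 0 = 0 → p j k < 1 / 2) → numOnes q k ≤ numOnes q 0 := fun k hk =>
    card_le_card <| monotone_filter_right _ fun j _ hj => by
      by_contra hj0
      have : q j 0 = 0 := by have := h.q_le_one j 0; omega
      rw [h.action_eq, codaAction_eq_zero_of_lt_half (hk j this)] at hj
      exact zero_ne_one hj
  have hstay : ∀ k j, q j 0 = 0 → p j k < 1 / 2 := fun k => by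
    induction k with
    | zero => exact fun j hj => (h.q_zero_eq_zero_iff j).1 hj
    | succ k ih =>
      exact fun j hj => h.lt_half_succ ((Nat.mul_le_mul_left 2 (hle k ih)).trans_lt h0) (ih j hj)
  exact (Nat.mul_le_mul_left 2 (hle k (hstay k))).trans_lt h0

lemma exists_lt_half (h : IsCompleteCODA n p q) (hmaj : ∀ k, 2 * numOnes q k < n) (i : Fin n) :
    ∃ k, p i k < 1 / 2 := by
  by_contra! hp
  have hq : ∀ k, q i k = 1 := fun k => h.action_eq i k ▸ codaAction_eq_one (hp k) (hp (k - 1))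
  set d : ℝ := 1 / (n - 1)
  have hd0 : 0 < d := one_div_pos.2 h.sub_one_pos
  have hd : d * (n - 1) = 1 := one_div_mul_cancel h.sub_one_pos.ne'
  have hgrow : ∀ k, (1 + d / 2) * (1 - p i k) ≤ 1 - p i (k + 1) := fun k => by
    have hm : (2 * numOnes q k + 1 : ℝ) ≤ n := by exact_mod_cast hmaj k
    rw [h.step_eq, one_sub_codaStep, hq]
    refine mul_le_codaStep (by linarith [(h.mem_Ioo k i).2]) (by linarith [hp k]) hd0.le ?_
    rw [Nat.cast_one, le_sub_comm, div_le_iff₀ h.sub_one_pos]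
    linarith
  obtain ⟨k, hk⟩ := (tendsto_atTop_of_geom_le (by linarith [(h.mem_Ioo 0 i).2])
    (by linarith) hgrow |>.eventually_gt_atTop 1).exists
  linarith [(h.mem_Ioo k i).1]

theorem tendsto_zero (h : IsCompleteCODA n p q) (h0 : 2 * numOnes q 0 < n) (i : Fin n) :
    Tendsto (p i) atTop (𝓝 0) := by
  have hmaj := h.two_mul_numOnes_lt h0
  have hev : ∀ j, ∀ᶠ k in atTop, p j k < 1 / 2 := fun j =>
    Nat.eventually_atTop_of_exists_of_succ (h.exists_lt_half hmaj j)
      fun k => h.lt_half_succ (hmaj k)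
  obtain ⟨K, hK⟩ := eventually_atTop.1 (eventually_all.2 hev)
  have hq : ∀ k ≥ K, ∀ j, q j k = 0 := fun k hk j =>
    h.action_eq j k ▸ codaAction_eq_zero_of_lt_half (hK k hk j)
  refine tendsto_of_succ_eq_of_tendsto_iterate (fun k hk => ?_)
    (tendsto_iterate_codaStep_zero (h.mem_Ioo K i))
  have : numOnes q k = 0 := card_eq_zero.2 (filter_eq_empty_iff.2 fun j _ => by simp [hq k hk j])
  rw [h.step_eq, this, hq k hk i]
  simp

lemma q_succ_eq_one_of_lt (h : IsCompleteCODA n p q) (hk : n < 2 * numOnes q k) (hq : q i k = 1) :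
    q i (k + 1) = 1 := by
  have hm : (n + 1 : ℝ) ≤ 2 * numOnes q k := by exact_mod_cast hk
  have hp := half_le_of_codaAction_eq_one (h.action_eq i k ▸ hq)
  refine h.q_succ_eq_one ?_ hp
  rw [h.step_eq]
  refine half_le_codaStep hp (h.mem_Ioo k i).2.le ?_
  rw [le_div_iff₀ h.sub_one_pos, hq, Nat.cast_one]
  linarith

lemma lt_two_mul_numOnes (h : IsCompleteCODA n p q) (h0 : n < 2 * numOnes q 0) (k : ℕ) :
    n < 2 * numOnes q k := by
  -- the initial `1`-actors keep acting `1`, so the set of `1`-actors never shrinks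
  have hle : ∀ k, (∀ j, q j 0 = 1 → q j k = 1) → numOnes q 0 ≤ numOnes q k := fun k hk =>
    card_le_card <| monotone_filter_right _ fun j _ => hk j
  have hstay : ∀ k j, q j 0 = 1 → q j k = 1 := fun k => by
    induction k with
    | zero => exact fun j hj => hj
    | succ k ih =>
      exact fun j hj =>
        h.q_succ_eq_one_of_lt (h0.trans_le (Nat.mul_le_mul_left 2 (hle k ih))) (ih j hj)
  exact h0.trans_le (Nat.mul_le_mul_left 2 (hle k (hstay k)))

lemma exists_q_eq_one (h : IsCompleteCODA n p q) (hmaj : ∀ k, n < 2 * numOnes q k) (i : Fin n) :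
    ∃ k, q i k = 1 := by
  by_contra! hq1
  have hq : ∀ k, q i k = 0 := fun k => by have := h.q_le_one i k; have := hq1 k; omega
  have hp : ∀ k, p i k ≤ 1 / 2 := fun k => not_lt.1 fun hk =>
    hq1 k (h.action_eq i k ▸ codaAction_eq_one_of_half_lt hk)
  set d : ℝ := 1 / (n - 1)
  have hd0 : 0 < d := one_div_pos.2 h.sub_one_pos
  have hd : d * (n - 1) = 1 := one_div_mul_cancel h.sub_one_pos.ne'
  have hgrow : ∀ k, (1 + d / 2) * p i k ≤ p i (k + 1) := fun k => by
    have hm : (n + 1 : ℝ) ≤ 2 * numOnes q k := by exact_mod_cast hmaj k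
    rw [h.step_eq, hq]
    refine mul_le_codaStep (h.mem_Ioo k i).1 (hp k) hd0.le ?_
    rw [Nat.cast_zero, sub_zero, le_div_iff₀ h.sub_one_pos]
    linarith
  obtain ⟨k, hk⟩ := (tendsto_atTop_of_geom_le (h.mem_Ioo 0 i).1
    (by linarith) hgrow |>.eventually_gt_atTop 1).exists
  linarith [(h.mem_Ioo k i).2]

theorem tendsto_one (h : IsCompleteCODA n p q) (h0 : n < 2 * numOnes q 0) (i : Fin n) :
    Tendsto (p i) atTop (𝓝 1) := by
  have hmaj := h.lt_two_mul_numOnes h0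
  have hev : ∀ j, ∀ᶠ k in atTop, q j k = 1 := fun j =>
    Nat.eventually_atTop_of_exists_of_succ (h.exists_q_eq_one hmaj j)
      fun k => h.q_succ_eq_one_of_lt (hmaj k)
  obtain ⟨K, hK⟩ := eventually_atTop.1 (eventually_all.2 hev)
  refine tendsto_of_succ_eq_of_tendsto_iterate (fun k hk => ?_)
    (tendsto_iterate_codaStep_one (h.mem_Ioo K i))
  have : numOnes q k = n := by
    rw [numOnes, filter_true_of_mem fun j _ => hK k hk j, card_univ, Fintype.card_fin]
  rw [h.step_eq, this, hK k hk i, Nat.cast_one, div_self h.sub_one_pos.ne']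

end IsCompleteCODA

/-- CODA model on the complete graph: if initially strictly more agents have action `0`
than action `1`, all opinions tend to `0`; conversely if strictly more have action `1`,
all opinions tend to `1`. -/
theorem stmt_13
    (n : ℕ) (hn : 2 ≤ n) (N : Fin n → Finset (Fin n))
    (hcomplete : ∀ i, N i = Finset.univ \ {i})
    (p : Fin n → ℕ → ℝ) (q : Fin n → ℕ → ℕ)
    (hq0 : ∀ i k, (p i k < 1 / 2 ∨ (p i k = 1 / 2 ∧ p i (k - 1) < 1 / 2)) → q i k = 0)
    (hq1 : ∀ i k, ¬(p i k < 1 / 2 ∨ (p i k = 1 / 2 ∧ p i (k - 1) < 1 / 2)) → q i k = 1)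
    (hupd : ∀ i k, p i (k + 1) =
      p i k + p i k * (1 - p i k) / (N i).card * ∑ j ∈ N i, ((q j k : ℝ) - p i k))
    (hp0 : ∀ i, p i 0 ∈ Set.Ioo (0 : ℝ) 1) :
    ((Finset.univ.filter fun i : Fin n => q i 0 = 1).card <
        (Finset.univ.filter fun i : Fin n => q i 0 = 0).card →
      ∀ i, Filter.Tendsto (fun k => p i k) Filter.atTop (nhds 0)) ∧
    ((Finset.univ.filter fun i : Fin n => q i 0 = 0).card <
        (Finset.univ.filter fun i : Fin n => q i 0 = 1).card →
      ∀ i, Filter.Tendsto (fun k => p i k) Filter.atTop (nhds 1)) := by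
  have hq : ∀ i k, q i k = codaAction (p i k) (p i (k - 1)) := fun i k => by
    unfold codaAction
    split_ifs with hc
    exacts [hq0 i k hc, hq1 i k hc]
  have hq_le : ∀ i k, q i k ≤ 1 := fun i k => hq i k ▸ codaAction_le_one
  have h : IsCompleteCODA n p q :=
    { two_le := hn
      action_eq := hq
      step_eq := fun i k => by
        rw [hupd, hcomplete, update_complete_eq_codaStep hn, sum_cast_eq_numOnes fun j => hq_le j k]
      mem_Ioo_zero := hp0 }
  have hcard := card_filter_eq_zero_add_numOnes fun j => hq_le j 0
  unfold numOnes at hcard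
  exact ⟨fun hlt => h.tendsto_zero (by unfold numOnes; omega),
    fun hlt => h.tendsto_one (by unfold numOnes; omega)⟩
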